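/- arXiv:0909.1437 — 4 statements merged into one kernel-verified Lean document; each statement's English description precedes it below -/
import Mathlib

section
/- If s is a real 2n×2n symplectic matrix with det(s - I) ≠ 0, then the matrix M = (1/2) J (s + I)(s - I)⁻¹ is symmetric: M = Mᵀ. -/
open Matrix

/-- The standard symplectic matrix `J = [[0, I], [-I, 0]]`. -/
def stdJ (n : ℕ) : Matrix (Fin n ⊕ Fin n) (Fin n ⊕ Fin n) ℝ :=
  Matrix.fromBlocks 0 1 (-1) 0

/-!
Congruence by the invertible matrix `s - 1` turns `J (s + 1) (s - 1)⁻¹` into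
`(s - 1)ᵀ J (s + 1)`, whose transpose is `-(s + 1)ᵀ J (s - 1)` because `J` is antisymmetric.
Expanding both products, they differ by `2 (sᵀ J s - J) = 0`.
-/

theorem stdJ_transpose (n : ℕ) : (stdJ n)ᵀ = -stdJ n := by
  simp [stdJ, fromBlocks_transpose, fromBlocks_neg]

namespace Matrix

variable {m R : Type*} [Fintype m] [DecidableEq m] [CommRing R]

theorem IsSymm.of_transpose_mul_mul {A M : Matrix m m R} (hA : IsUnit A)
    (h : (Aᵀ * M * A).IsSymm) : M.IsSymm := by
  have hAt : IsUnit Aᵀ := (isUnit_transpose A).mpr hA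
  refine hA.mul_left_injective (hAt.mul_right_injective ?_)
  simpa only [transpose_mul, transpose_transpose, mul_assoc] using h.eq

theorem add_one_transpose_mul_mul_sub_one {J s : Matrix m m R} (hs : sᵀ * J * s = J) :
    (s + 1)ᵀ * J * (s - 1) = -((s - 1)ᵀ * J * (s + 1)) := by
  simp only [transpose_add, transpose_sub, transpose_one, add_mul, sub_mul, mul_add, mul_sub,
    one_mul, mul_one, hs]
  abel

theorem isSymm_mul_add_one_mul_inv_sub_one {J s : Matrix m m R} (hJ : Jᵀ = -J)
    (hs : sᵀ * J * s = J) (hs1 : IsUnit (s - 1)) :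
    (J * (s + 1) * (s - 1)⁻¹).IsSymm := by
  refine IsSymm.of_transpose_mul_mul hs1 ?_
  have hcancel : J * (s + 1) * (s - 1)⁻¹ * (s - 1) = J * (s + 1) := by
    rw [mul_assoc _ (s - 1)⁻¹, nonsing_inv_mul _ ((isUnit_iff_isUnit_det _).mp hs1), mul_one]
  rw [IsSymm, mul_assoc, hcancel, ← mul_assoc, transpose_mul, transpose_mul, hJ,
    transpose_transpose, neg_mul, mul_neg, ← mul_assoc, add_one_transpose_mul_mul_sub_one hs,
    neg_neg]

end Matrix

/-- If `s` is symplectic with `det (s - I) ≠ 0`, then `M = (1/2) J (s+I)(s-I)⁻¹`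
is symmetric. -/
theorem symplectic_cayley_symm (n : ℕ)
    (s : Matrix (Fin n ⊕ Fin n) (Fin n ⊕ Fin n) ℝ)
    (hs : sᵀ * stdJ n * s = stdJ n)
    (hdet : (s - 1).det ≠ 0) :
    (1 / 2 : ℝ) • (stdJ n * (s + 1) * (s - 1)⁻¹) =
      ((1 / 2 : ℝ) • (stdJ n * (s + 1) * (s - 1)⁻¹))ᵀ := by
  have hs1 : IsUnit (s - 1) := (isUnit_iff_isUnit_det _).mpr hdet.isUnit
  have hsymm := isSymm_mul_add_one_mul_inv_sub_one (stdJ_transpose n) hs hs1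
  exact ((hsymm.smul (1 / 2 : ℝ)).eq).symm
end

section
/- Let s be a symplectic matrix written in n×n block form s = [[A, B], [C, D]] with det B ≠ 0. Then det(s - I) = (-1)ⁿ · det B · det(B⁻¹A + DB⁻¹ - B⁻¹ - (Bᵀ)⁻¹). -/
/-!
Since `B` is invertible, swapping the two block columns of `s - 1 = [[A - 1, B], [C, D - 1]]`
(which costs `(-1)ⁿ`) puts `B` in the top left corner, and the Schur complement gives
`det (s - 1) = (-1)ⁿ det B · det (C - (D - 1) B⁻¹ (A - 1))`. The symplectic relations
`BᵀD = DᵀB` and `DᵀA - BᵀC = 1` say exactly that `(Bᵀ)⁻¹ = D B⁻¹ A - C`, which turns the Schur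
complement into `B⁻¹A + DB⁻¹ - B⁻¹ - (Bᵀ)⁻¹`.
-/

open Matrix

namespace Matrix

variable {m R : Type*} [DecidableEq m]

theorem fromBlocks_sub_one [AddGroupWithOne R] (A B C D : Matrix m m R) :
    fromBlocks A B C D - 1 = fromBlocks (A - 1) B C (D - 1) := by
  rw [← fromBlocks_one, sub_eq_add_neg, fromBlocks_neg, fromBlocks_add]
  simp only [neg_zero, add_zero, sub_eq_add_neg]

variable [Fintype m] [CommRing R]

theorem det_fromBlocks_zero_one_one_zero :
    (fromBlocks 0 1 1 0 : Matrix (m ⊕ m) (m ⊕ m) R).det = (-1) ^ Fintype.card m := by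
  have hswap : (fromBlocks 0 1 1 0 : Matrix (m ⊕ m) (m ⊕ m) R) =
      fromBlocks 1 0 1 1 * fromBlocks 1 (-1) 0 1 * fromBlocks 1 0 1 1 * fromBlocks 1 0 0 (-1) := by
    simp [fromBlocks_multiply]
  rw [hswap]
  simp [det_fromBlocks_zero₂₁, det_neg]

theorem det_fromBlocks_of_isUnit_det₁₂ (A B C D : Matrix m m R) (hB : IsUnit B.det) :
    (fromBlocks A B C D).det = (-1) ^ Fintype.card m * B.det * (C - D * B⁻¹ * A).det := by
  let := invertibleOfIsUnitDet B hB
  have hswap : fromBlocks A B C D = fromBlocks B A D C * fromBlocks 0 1 1 0 := by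
    simp [fromBlocks_multiply]
  rw [hswap, det_mul, det_fromBlocks₁₁, det_fromBlocks_zero_one_one_zero, invOf_eq_nonsing_inv]
  ring

theorem fromBlocks_transpose_mul_stdJ_mul (A B C D : Matrix m m R) :
    (fromBlocks A B C D)ᵀ * fromBlocks 0 1 (-1) 0 * fromBlocks A B C D =
      fromBlocks (Aᵀ * C - Cᵀ * A) (Aᵀ * D - Cᵀ * B) (Bᵀ * C - Dᵀ * A) (Bᵀ * D - Dᵀ * B) := by
  simp only [fromBlocks_transpose, fromBlocks_multiply]
  congr 1 <;> noncomm_ring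

theorem transpose_inv_eq_of_symplectic {A B C D : Matrix m m R}
    (hs : (fromBlocks A B C D)ᵀ * fromBlocks 0 1 (-1) 0 * fromBlocks A B C D =
      fromBlocks 0 1 (-1) 0)
    (hB : IsUnit B.det) : Bᵀ⁻¹ = D * B⁻¹ * A - C := by
  rw [fromBlocks_transpose_mul_stdJ_mul] at hs
  obtain ⟨-, -, h₂₁, h₂₂⟩ := fromBlocks_inj.mp hs
  have hBD : Bᵀ * D = Dᵀ * B := sub_eq_zero.mp h₂₂
  apply inv_eq_right_inv
  calc Bᵀ * (D * B⁻¹ * A - C) = Dᵀ * (B * B⁻¹) * A - Bᵀ * C := by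
        rw [Matrix.mul_sub, ← Matrix.mul_assoc, ← Matrix.mul_assoc, hBD, Matrix.mul_assoc Dᵀ]
    _ = 1 := by
        rw [mul_nonsing_inv B hB, Matrix.mul_one, ← neg_sub, h₂₁, neg_neg]

end Matrix

/-- For a symplectic matrix `s = [[A, B], [C, D]]` with `det B ≠ 0`,
`det (s - I) = (-1)ⁿ det B · det (B⁻¹A + DB⁻¹ - B⁻¹ - (Bᵀ)⁻¹)`. -/
theorem det_symplectic_sub_one (n : ℕ) (A B C D : Matrix (Fin n) (Fin n) ℝ)
    (hs : (Matrix.fromBlocks A B C D)ᵀ * stdJ n * Matrix.fromBlocks A B C D = stdJ n)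
    (hB : B.det ≠ 0) :
    (Matrix.fromBlocks A B C D - 1).det =
      (-1 : ℝ) ^ n * B.det * (B⁻¹ * A + D * B⁻¹ - B⁻¹ - Bᵀ⁻¹).det := by
  have hBT : Bᵀ⁻¹ = D * B⁻¹ * A - C := transpose_inv_eq_of_symplectic hs hB.isUnit
  rw [fromBlocks_sub_one, det_fromBlocks_of_isUnit_det₁₂ _ _ _ _ hB.isUnit, Fintype.card_fin, hBT]
  congr 2
  noncomm_ring
end

section
/- Let s = [[A, B], [C, D]] be a symplectic matrix with B invertible, and define the generating function W(x, x') = (1/2)⟨DB⁻¹x, x⟩ - ⟨B⁻¹x, x'⟩ + (1/2)⟨B⁻¹Ax', x'⟩ on ℝⁿ × ℝⁿ. Then s(x', p') = (x, p) holds if and only if p = ∇ₓW(x, x') and p' = -∇_{x'}W(x, x'). -/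
/-!
Symplecticity of `[[A, B], [C, D]]` together with invertibility of `B` makes `D B⁻¹` and `B⁻¹ A`
symmetric and forces `C = D B⁻¹ A - B⁻ᵀ`. Symmetry makes `W` a quadratic function of each variable,
with `∇ₓW = D B⁻¹ x - B⁻ᵀ x'` and `∇_{x'}W = B⁻¹ A x' - B⁻¹ x`. Solving `x = A x' + B p'` for `p'`
and substituting into `p = C x' + D p'` then yields exactly these two gradients, thanks to the
formula for `C`.
-/

open Matrix

theorem stdJ_eq_neg_J (n : ℕ) : stdJ n = -J (Fin n) ℝ := by
  simp [stdJ, J, fromBlocks_neg]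

theorem mem_symplecticGroup_iff_transpose_mul_stdJ_mul {n : ℕ}
    {s : Matrix (Fin n ⊕ Fin n) (Fin n ⊕ Fin n) ℝ} :
    s ∈ symplecticGroup (Fin n) ℝ ↔ sᵀ * stdJ n * s = stdJ n := by
  rw [SymplecticGroup.mem_iff', stdJ_eq_neg_J, mul_neg, neg_mul, neg_inj]

namespace SymplecticGroup

variable {l R : Type*} [Fintype l] [DecidableEq l] [CommRing R] {A B C D : Matrix l l R}

theorem isSymm_mul_inv_of_fromBlocks_mem (hs : fromBlocks A B C D ∈ symplecticGroup l R)
    (hB : IsUnit B.det) : (D * B⁻¹).IsSymm := by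
  have := invertibleOfIsUnitDet B hB
  have hBD : Bᵀ * D = Dᵀ * B := (fromBlocks_mem_iff.mp hs).2.1
  rw [IsSymm, transpose_mul, transpose_nonsing_inv, inv_mul_eq_iff_eq_mul_of_invertible,
    ← Matrix.mul_assoc, hBD, mul_inv_cancel_right_of_invertible]

theorem isSymm_inv_mul_of_fromBlocks_mem (hs : fromBlocks A B C D ∈ symplecticGroup l R)
    (hB : IsUnit B.det) : (B⁻¹ * A).IsSymm := by
  have := invertibleOfIsUnitDet B hB
  have hABt : A * Bᵀ = B * Aᵀ := by
    have hst := transpose_mem hs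
    rw [fromBlocks_transpose] at hst
    simpa only [transpose_transpose] using (fromBlocks_mem_iff.mp hst).1
  rw [IsSymm, transpose_mul, transpose_nonsing_inv, mul_inv_eq_iff_eq_mul_of_invertible,
    Matrix.mul_assoc, hABt, inv_mul_cancel_left_of_invertible]

theorem eq_mul_inv_mul_sub_inv_transpose_of_fromBlocks_mem
    (hs : fromBlocks A B C D ∈ symplecticGroup l R) (hB : IsUnit B.det) :
    C = D * B⁻¹ * A - B⁻¹ᵀ := by
  have := invertibleOfIsUnitDet B hB
  have hCB : Cᵀ * B = Aᵀ * D - 1 := by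
    rw [eq_sub_iff_add_eq, ← eq_sub_iff_add_eq', (fromBlocks_mem_iff.mp hs).2.2]
  have hCt : Cᵀ = Aᵀ * (D * B⁻¹) - B⁻¹ := by
    rw [← mul_inv_cancel_right_of_invertible B Cᵀ, hCB, Matrix.sub_mul, Matrix.one_mul,
      Matrix.mul_assoc]
  rw [← transpose_transpose C, hCt, transpose_sub, transpose_mul, transpose_transpose,
    (isSymm_mul_inv_of_fromBlocks_mem hs hB).eq]

end SymplecticGroup

theorem fromBlocks_mulVec_sumElim_eq_iff {l R : Type*} [Fintype l] [DecidableEq l] [CommRing R]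
    {A B C D : Matrix l l R} (hB : IsUnit B.det) (hC : C = D * B⁻¹ * A - B⁻¹ᵀ)
    (x p x' p' : l → R) :
    fromBlocks A B C D *ᵥ Sum.elim x' p' = Sum.elim x p ↔
      p = (D * B⁻¹) *ᵥ x - B⁻¹ᵀ *ᵥ x' ∧ p' = B⁻¹ *ᵥ x - (B⁻¹ * A) *ᵥ x' := by
  have := invertibleOfIsUnitDet B hB
  have hp' : A *ᵥ x' + B *ᵥ p' = x ↔ p' = B⁻¹ *ᵥ x - (B⁻¹ * A) *ᵥ x' := by
    constructor
    · rintro rfl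
      simp [mulVec_add, mulVec_mulVec]
    · rintro rfl
      simp [mulVec_sub, mulVec_mulVec, ← Matrix.mul_assoc]
  rw [fromBlocks_mulVec, Sum.elim_eq_iff, Sum.elim_comp_inl, Sum.elim_comp_inr, hp', and_comm]
  refine and_congr_left fun hp'_eq => ?_
  have hp : C *ᵥ x' + D *ᵥ p' = (D * B⁻¹) *ᵥ x - B⁻¹ᵀ *ᵥ x' := by
    rw [hp'_eq, hC, sub_mulVec, mulVec_sub, mulVec_mulVec, mulVec_mulVec, Matrix.mul_assoc]
    abel
  rw [hp, eq_comm]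

theorem hasGradientAt_quadratic {ι : Type*} [Fintype ι] [DecidableEq ι] {M : Matrix ι ι ℝ}
    (hM : M.IsSymm) (v : ι → ℝ) (c : ℝ) (x : EuclideanSpace ℝ ι) :
    HasGradientAt (fun y : EuclideanSpace ℝ ι => (1 / 2) * (M *ᵥ y ⬝ᵥ y) + v ⬝ᵥ y + c)
      (WithLp.toLp 2 (M *ᵥ x + v)) x := by
  set T := toEuclideanCLM (𝕜 := ℝ) (n := ι) M
  have hT : (T : EuclideanSpace ℝ ι →ₗ[ℝ] EuclideanSpace ℝ ι).IsSymmetric :=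
    isSymmetric_toEuclideanLin_iff.mpr (isHermitian_iff_isSymm.mpr hM)
  have hf : (fun y : EuclideanSpace ℝ ι => (1 / 2) * (M *ᵥ y ⬝ᵥ y) + v ⬝ᵥ y + c) =
      fun y => (1 / 2) * T.reApplyInnerSelf y + innerSL ℝ (WithLp.toLp 2 v) y + c := by
    ext y
    simp [T, ContinuousLinearMap.reApplyInnerSelf_apply, EuclideanSpace.inner_eq_star_dotProduct,
      dotProduct_comm]
  have hf' : InnerProductSpace.toDual ℝ _ (WithLp.toLp 2 (M *ᵥ x + v)) =
      (1 / 2 : ℝ) • (2 : ℕ) • innerSL ℝ (T x) + innerSL ℝ (WithLp.toLp 2 v) := by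
    ext y
    simp [T, EuclideanSpace.inner_eq_star_dotProduct, dotProduct_comm]
  rw [hasGradientAt_iff_hasFDerivAt, hf, hf']
  exact (((hT.hasStrictFDerivAt_reApplyInnerSelf x).hasFDerivAt.const_mul (1 / 2)).add
    (innerSL ℝ (WithLp.toLp 2 v)).hasFDerivAt).add_const c

/-- Let `s = [[A, B], [C, D]]` be symplectic with `det B ≠ 0` and
`W(x, x') = (1/2)⟨DB⁻¹x, x⟩ - ⟨B⁻¹x, x'⟩ + (1/2)⟨B⁻¹Ax', x'⟩` its generating function.
Then `s(x', p') = (x, p)` iff `p = ∇ₓW(x,x')` and `p' = -∇_{x'}W(x,x')`. -/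
theorem generating_function_of_symplectic (n : ℕ) (A B C D : Matrix (Fin n) (Fin n) ℝ)
    (hs : (Matrix.fromBlocks A B C D)ᵀ * stdJ n * Matrix.fromBlocks A B C D = stdJ n)
    (hB : B.det ≠ 0)
    (W : EuclideanSpace ℝ (Fin n) → EuclideanSpace ℝ (Fin n) → ℝ)
    (hW : ∀ x x', W x x' =
      (1 / 2) * ((D * B⁻¹).mulVec x ⬝ᵥ x) - (B⁻¹.mulVec x ⬝ᵥ x')
        + (1 / 2) * ((B⁻¹ * A).mulVec x' ⬝ᵥ x'))
    (x p x' p' : EuclideanSpace ℝ (Fin n)) :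
    (Matrix.fromBlocks A B C D).mulVec (Sum.elim x' p') = Sum.elim x p ↔
      p = gradient (fun y => W y x') x ∧ p' = -gradient (fun y' => W x y') x' := by
  have hsymp := mem_symplecticGroup_iff_transpose_mul_stdJ_mul.mpr hs
  have hB' : IsUnit B.det := hB.isUnit
  have hgrad : gradient (fun y => W y x') x = WithLp.toLp 2 ((D * B⁻¹) *ᵥ x - B⁻¹ᵀ *ᵥ x') := by
    rw [sub_eq_add_neg, ← (hasGradientAt_quadratic
      (SymplecticGroup.isSymm_mul_inv_of_fromBlocks_mem hsymp hB') _
      ((1 / 2) * ((B⁻¹ * A) *ᵥ x' ⬝ᵥ x')) x).gradient]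
    congr 1
    funext y
    rw [hW, dotProduct_comm (B⁻¹ *ᵥ _), dotProduct_mulVec, ← mulVec_transpose, neg_dotProduct]
    ring
  have hgrad' : gradient (fun y' => W x y') x' = WithLp.toLp 2 ((B⁻¹ * A) *ᵥ x' - B⁻¹ *ᵥ x) := by
    rw [sub_eq_add_neg, ← (hasGradientAt_quadratic
      (SymplecticGroup.isSymm_inv_mul_of_fromBlocks_mem hsymp hB') _
      ((1 / 2) * ((D * B⁻¹) *ᵥ x ⬝ᵥ x)) x').gradient]
    congr 1
    funext y'
    rw [hW, neg_dotProduct]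
    ring
  rw [hgrad, hgrad', ← WithLp.toLp_neg, neg_sub, fromBlocks_mulVec_sumElim_eq_iff hB'
    (SymplecticGroup.eq_mul_inv_mul_sub_inv_transpose_of_fromBlocks_mem hsymp hB')]
  simp only [← (WithLp.ofLp_injective 2).eq_iff]
end

section
/- For a real symmetric invertible d×d matrix M, the regularized Gaussian integral satisfies lim_{ε→0⁺} ∫_{ℝ^d} e^{(i/2)⟨Mz,z⟩} e^{-ε|z|²/2} dz = (2π)^{d/2} |det M|^{-1/2} e^{(iπ/4)·sgn(M)}, where sgn(M) is the number of positive eigenvalues minus the number of negative eigenvalues of M. -/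
/-!
Rotating by an orthogonal matrix that diagonalises `M` turns the integrand into a product
of one-dimensional Gaussians `exp (-(ε - i λⱼ) t² / 2)`, each integrating to the principal
square root of `2π / (ε - i λⱼ)`. Since `2π i / λⱼ` lies off the branch cut, this tends as
`ε → 0⁺` to `(2π i / λⱼ) ^ (1/2) = √(2π / |λⱼ|) e^{iπ sgn(λⱼ) / 4}`; the product over `j`
then produces `|det M| = ∏ |λⱼ|` and the signature `∑ sgn λⱼ`.
-/

open Matrix Complex MeasureTheory Real Filter

lemma Matrix.dotProduct_mulVec_mulVec {m n R : Type*} [Fintype m] [Fintype n]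
    [CommSemiring R] (A : Matrix m m R) (U : Matrix m n R) (y : n → R) :
    A *ᵥ (U *ᵥ y) ⬝ᵥ U *ᵥ y = (Uᵀ * A * U) *ᵥ y ⬝ᵥ y := by
  rw [mulVec_mulVec, dotProduct_mulVec, ← mulVec_transpose, mulVec_mulVec, Matrix.mul_assoc]

section Orthogonal

variable {ι : Type*} [Fintype ι] [DecidableEq ι] {U : Matrix ι ι ℝ}

lemma Matrix.abs_det_eq_one_of_mem_orthogonalGroup (hU : U ∈ orthogonalGroup ι ℝ) : |U.det| = 1 :=
  (abs_eq zero_le_one).2 (Unitary.mem_iff_eq_one_or_eq_neg_one.1 (det_of_mem_unitary hU))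

lemma Matrix.measurePreserving_mulVec_of_abs_det_eq_one (hU : |U.det| = 1) :
    MeasurePreserving (U *ᵥ ·) volume volume := by
  refine ⟨(toLin' U).continuous_of_finiteDimensional.measurable, ?_⟩
  have hdet : LinearMap.det (toLin' U) ≠ 0 := by
    rw [LinearMap.det_toLin']; intro h; simp [h] at hU
  have := Real.map_linearMap_volume_pi_eq_smul_volume_pi hdet
  rwa [LinearMap.det_toLin', abs_inv, hU, inv_one, ENNReal.ofReal_one, one_smul] at this

lemma Matrix.integral_comp_mulVec_of_mem_orthogonalGroup {E : Type*} [NormedAddCommGroup E]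
    [NormedSpace ℝ E] (hU : U ∈ orthogonalGroup ι ℝ) (f : (ι → ℝ) → E) :
    ∫ y, f (U *ᵥ y) = ∫ z, f z :=
  (measurePreserving_mulVec_of_abs_det_eq_one
      (abs_det_eq_one_of_mem_orthogonalGroup hU)).integral_comp'
    (f := (UnitaryGroup.toLinearEquiv ⟨U, hU⟩).toContinuousLinearEquiv.toHomeomorph
      |>.toMeasurableEquiv) f

lemma Matrix.dotProduct_mulVec_self_of_mem_orthogonalGroup (hU : U ∈ orthogonalGroup ι ℝ)
    (y : ι → ℝ) :
    U *ᵥ y ⬝ᵥ U *ᵥ y = y ⬝ᵥ y := by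
  simpa [(mem_orthogonalGroup_iff' ι ℝ).1 hU] using dotProduct_mulVec_mulVec 1 U y

end Orthogonal

lemma Complex.cpow_half_ofReal_mul_exp {r θ : ℝ} (hr : 0 < r) (hθ₁ : -π < θ)
    (hθ₂ : θ ≤ π) :
    ((r : ℂ) * cexp (θ * I)) ^ (1 / 2 : ℂ) = √r * cexp (θ / 2 * I) := by
  rw [cpow_def_of_ne_zero (mul_ne_zero (ofReal_ne_zero.2 hr.ne') (exp_ne_zero _)),
    log_ofReal_mul hr (exp_ne_zero _), log_exp (by simpa) (by simpa), Real.sqrt_eq_rpow,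
    Real.rpow_def_of_pos hr, ofReal_exp, ← Complex.exp_add]
  push_cast
  ring_nf

lemma two_pi_mul_I_div_eq_polar {a : ℝ} (ha : a ≠ 0) :
    2 * π * I / a = ((2 * π / |a| : ℝ) : ℂ) * cexp ((Real.sign a * (π / 2) : ℝ) * I) := by
  have ha' : (a : ℂ) ≠ 0 := ofReal_ne_zero.2 ha
  rcases ha.lt_or_gt with hneg | hpos
  · rw [abs_of_neg hneg, Real.sign_of_neg hneg]
    push_cast
    rw [show -1 * (π / 2 : ℂ) = -π / 2 by ring, exp_neg_pi_div_two_mul_I]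
    field_simp
  · rw [abs_of_pos hpos, Real.sign_of_pos hpos]
    push_cast
    rw [one_mul, exp_pi_div_two_mul_I]
    field_simp

lemma cpow_half_two_pi_mul_I_div {a : ℝ} (ha : a ≠ 0) :
    (2 * π * I / a) ^ (1 / 2 : ℂ) = √(2 * π / |a|) * cexp (I * π / 4 * Real.sign a) := by
  have hsign : |Real.sign a| ≤ 1 := by
    rcases Real.sign_apply_eq a with h | h | h <;> simp [h]
  obtain ⟨hsign₁, hsign₂⟩ := abs_le.1 hsign
  rw [two_pi_mul_I_div_eq_polar ha, cpow_half_ofReal_mul_exp (by positivity)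
    (by nlinarith [pi_pos]) (by nlinarith [pi_pos])]
  push_cast
  ring_nf

lemma tendsto_cpow_half_pi_div_sub_I_mul {a : ℝ} (ha : a ≠ 0) :
    Tendsto (fun ε : ℝ => ((π : ℂ) / ((ε - I * a) / 2)) ^ (1 / 2 : ℂ)) (nhds 0)
      (nhds (√(2 * π / |a|) * cexp (I * π / 4 * Real.sign a))) := by
  have hbase : (π : ℂ) / (((0 : ℝ) - I * a) / 2) = 2 * π * I / a := by
    have : (a : ℂ) ≠ 0 := ofReal_ne_zero.2 ha
    rw [ofReal_zero, zero_sub, div_eq_div_iff (by simp [I_ne_zero, this]) this]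
    ring_nf
    rw [I_sq]
    ring
  rw [← cpow_half_two_pi_mul_I_div ha, ← hbase]
  refine ContinuousAt.cpow ?_ continuousAt_const ?_
  · refine continuousAt_const.div (by fun_prop) ?_
    simp [I_ne_zero, ha]
  · rw [hbase, mem_slitPlane_iff]
    right
    simp [div_ofReal_im, pi_ne_zero, ha]

lemma Finset.sum_sign_eq_card_pos_sub_card_neg {ι : Type*} (s : Finset ι) (f : ι → ℝ) :
    ∑ i ∈ s, Real.sign (f i) =
      (((s.filter (0 < f ·)).card : ℤ) - (s.filter (f · < 0)).card : ℤ) := by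
  have hsign : ∀ x : ℝ, Real.sign x = (if 0 < x then 1 else 0) - (if x < 0 then 1 else 0) := by
    intro x
    rcases lt_trichotomy x 0 with h | rfl | h
    · simp [Real.sign_of_neg h, h, h.not_gt]
    · simp
    · simp [Real.sign_of_pos h, h, h.not_gt]
  push_cast
  simp only [hsign, Finset.sum_sub_distrib, Finset.sum_boole]

lemma Real.prod_sqrt_div_abs {ι : Type*} [Fintype ι] {c : ℝ} (hc : 0 ≤ c) (a : ι → ℝ) :
    ∏ i, √(c / |a i|) = c ^ ((Fintype.card ι : ℝ) / 2) * (√|∏ i, a i|)⁻¹ := by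
  have hpow : c ^ ((Fintype.card ι : ℝ) / 2) = ∏ _i : ι, √c := by
    rw [Finset.prod_const, Finset.card_univ, Real.sqrt_eq_rpow, ← Real.rpow_mul_natCast hc]
    ring_nf
  rw [hpow, Finset.abs_prod, Real.sqrt_prod _ fun i _ => abs_nonneg (a i),
    ← Finset.prod_inv_distrib, ← Finset.prod_mul_distrib]
  simp_rw [Real.sqrt_div' _ (abs_nonneg _), div_eq_mul_inv]

namespace Matrix.IsHermitian

variable {ι : Type*} [Fintype ι] [DecidableEq ι] {M : Matrix ι ι ℝ} (hM : M.IsHermitian)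

lemma transpose_eigenvectorUnitary_mul_mul :
    (hM.eigenvectorUnitary : Matrix ι ι ℝ)ᵀ * M * hM.eigenvectorUnitary =
      diagonal hM.eigenvalues := by
  rw [← conjTranspose_eq_transpose_of_trivial, ← star_eq_conjTranspose,
    ← Unitary.conjStarAlgAut_star_apply (S := ℝ), hM.conjStarAlgAut_star_eigenvectorUnitary,
    RCLike.ofReal_real_eq_id, Function.id_comp]

lemma mulVec_eigenvectorUnitary_dotProduct (y : ι → ℝ) :
    M *ᵥ (hM.eigenvectorUnitary *ᵥ y) ⬝ᵥ hM.eigenvectorUnitary *ᵥ y =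
      ∑ i, hM.eigenvalues i * y i ^ 2 := by
  rw [dotProduct_mulVec_mulVec, transpose_eigenvectorUnitary_mul_mul]
  simp [dotProduct, mulVec_diagonal, sq, mul_assoc]

lemma integral_cexp_quadratic_mul_gaussian {ε : ℝ} (hε : 0 < ε) :
    ∫ z : ι → ℝ, cexp (I / 2 * ↑(M *ᵥ z ⬝ᵥ z)) * ↑(rexp (-(ε / 2) * (z ⬝ᵥ z))) =
      ∏ i, ((π : ℂ) / ((ε - I * hM.eigenvalues i) / 2)) ^ (1 / 2 : ℂ) := by
  set U : Matrix ι ι ℝ := ↑hM.eigenvectorUnitary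
  have hU : U ∈ orthogonalGroup ι ℝ := hM.eigenvectorUnitary.2
  rw [← integral_comp_mulVec_of_mem_orthogonalGroup hU]
  have hfactor : ∀ y : ι → ℝ,
      cexp (I / 2 * ↑(M *ᵥ (U *ᵥ y) ⬝ᵥ U *ᵥ y)) * ↑(rexp (-(ε / 2) * (U *ᵥ y ⬝ᵥ U *ᵥ y))) =
      ∏ i, cexp (-((ε - I * hM.eigenvalues i) / 2) * (y i : ℂ) ^ 2) := by
    intro y
    rw [mulVec_eigenvectorUnitary_dotProduct, dotProduct_mulVec_self_of_mem_orthogonalGroup hU,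
      ofReal_exp, ← Complex.exp_add, ← Complex.exp_sum]
    simp only [dotProduct]
    push_cast
    rw [Finset.mul_sum, Finset.mul_sum, ← Finset.sum_add_distrib]
    exact congrArg cexp (Finset.sum_congr rfl fun i _ => by ring)
  simp only [hfactor]
  rw [integral_fintype_prod_volume_eq_prod (E := fun _ => ℝ)
    (fun i t => cexp (-((ε - I * hM.eigenvalues i) / 2) * (t : ℂ) ^ 2))]
  refine Finset.prod_congr rfl fun i _ => integral_gaussian_complex ?_
  simpa [div_re] using hε

end Matrix.IsHermitian

/-- Fresnel integral formula: for a real symmetric (Hermitian) invertible `d×d` matrix `M`,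
`lim_{ε→0⁺} ∫ e^{(i/2)⟨Mz,z⟩} e^{-ε|z|²/2} dz = (2π)^{d/2} |det M|^{-1/2} e^{(iπ/4) sgn M}`,
where `sgn M` is the number of positive eigenvalues minus the number of negative
eigenvalues of `M`. -/
theorem fresnel_integral (d : ℕ) (M : Matrix (Fin d) (Fin d) ℝ)
    (hM : M.IsHermitian) (hdet : M.det ≠ 0) :
    Tendsto
      (fun ε : ℝ => ∫ z : Fin d → ℝ,
        Complex.exp ((Complex.I / 2) * ((M.mulVec z ⬝ᵥ z : ℝ))) *
          (Real.exp (-(ε / 2) * (z ⬝ᵥ z)) : ℝ))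
      (nhdsWithin 0 (Set.Ioi 0))
      (nhds (((2 * π) ^ ((d : ℝ) / 2) * (Real.sqrt |M.det|)⁻¹ : ℝ) *
        Complex.exp ((Complex.I * π / 4) *
          ((((Finset.univ.filter fun i => 0 < hM.eigenvalues i).card : ℤ) -
            ((Finset.univ.filter fun i => hM.eigenvalues i < 0).card : ℤ) : ℤ) : ℂ)))) := by
  have hdet_eq : M.det = ∏ i, hM.eigenvalues i := by simpa using hM.det_eq_prod_eigenvalues
  have heig : ∀ i, hM.eigenvalues i ≠ 0 := by
    simpa [hdet_eq, Finset.prod_ne_zero_iff] using hdet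
  have hlim := tendsto_finsetProd Finset.univ fun i _ =>
    tendsto_cpow_half_pi_div_sub_I_mul (heig i)
  rw [Finset.prod_mul_distrib, ← ofReal_prod, Real.prod_sqrt_div_abs two_pi_pos.le,
    ← hdet_eq, Fintype.card_fin, ← Complex.exp_sum, ← Finset.mul_sum, ← ofReal_sum,
    Finset.sum_sign_eq_card_pos_sub_card_neg, ofReal_intCast] at hlim
  refine (hlim.mono_left nhdsWithin_le_nhds).congr' ?_
  filter_upwards [self_mem_nhdsWithin] with ε hε
  exact (hM.integral_cexp_quadratic_mul_gaussian hε).symm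
end
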